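/- For each n, let U_n(x) = -α x_n² - (θ + α Σ_{m≠n} x_m) x_n + δ_n with α > 0, with each action set a nonempty compact interval. Then the game admits at most one pure-strategy Nash equilibrium (and hence exactly one). -/

import Mathlib

/-!
On an interval, a maximiser `t` of a differentiable function satisfies the first-order condition
`f'(t) (z - t) ≤ 0`. Writing `g_i(x) = ∂U_i/∂x_i = -α x_i - θ - α ∑_j x_j`, two equilibria `x`, `y`
therefore give `∑_i (y_i - x_i) (g_i(x) - g_i(y)) ≤ 0`. But this sum equals
`α (∑_i (y_i - x_i)² + (∑_i (y_i - x_i))²)`, which is positive unless `x = y`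
(Rosen's diagonal strict concavity).
-/

open Finset

theorem IsMaxOn.deriv_mul_sub_nonpos {f : ℝ → ℝ} {s : Set ℝ} {f' t z : ℝ} (h : IsMaxOn f s t)
    (hf : HasDerivAt f f' t) (hs : Convex ℝ s) (ht : t ∈ s) (hz : z ∈ s) :
    f' * (z - t) ≤ 0 := by
  have := h.localize.hasFDerivWithinAt_nonpos hf.hasFDerivAt.hasFDerivWithinAt
    (sub_mem_posTangentConeAt_of_segment_subset (hs.segment_subset ht hz))
  simpa [mul_comm] using this

section Rosen

variable {ι : Type*} [Fintype ι]

def DiagonallyStrictlyConcave (g : (ι → ℝ) → ι → ℝ) : Prop :=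
  ∀ x y, x ≠ y → 0 < ∑ i, (y i - x i) * (g x i - g y i)

theorem DiagonallyStrictlyConcave.eq_of_forall_mul_sub_nonpos {g : (ι → ℝ) → ι → ℝ}
    (hg : DiagonallyStrictlyConcave g) {x y : ι → ℝ}
    (hx : ∀ i, g x i * (y i - x i) ≤ 0) (hy : ∀ i, g y i * (x i - y i) ≤ 0) : x = y := by
  by_contra hne
  have hsum : ∑ i, (y i - x i) * (g x i - g y i) ≤ 0 :=
    sum_nonpos fun i _ => by
      have hsplit : (y i - x i) * (g x i - g y i) = g x i * (y i - x i) + g y i * (x i - y i) := by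
        ring
      linarith [hx i, hy i]
  exact (hg x y hne).not_ge hsum

end Rosen

namespace LinearQuadraticGame

variable {ι : Type*} [Fintype ι] {α θ : ℝ}

def marginalUtility (α θ : ℝ) (x : ι → ℝ) (i : ι) : ℝ :=
  -α * x i - θ - α * ∑ j, x j

theorem sum_mul_marginalUtility_sub (x y : ι → ℝ) :
    ∑ i, (y i - x i) * (marginalUtility α θ x i - marginalUtility α θ y i) =
      α * (∑ i, (y i - x i) ^ 2 + (∑ i, (y i - x i)) ^ 2) := by
  have hdiff : ∀ i, marginalUtility α θ x i - marginalUtility α θ y i =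
      α * ((y i - x i) + ∑ j, (y j - x j)) := fun i => by
    simp only [marginalUtility, sum_sub_distrib]
    ring
  simp only [hdiff]
  calc ∑ i, (y i - x i) * (α * ((y i - x i) + ∑ j, (y j - x j)))
      = α * ∑ i, ((y i - x i) ^ 2 + (y i - x i) * ∑ j, (y j - x j)) := by
        rw [mul_sum]
        exact sum_congr rfl fun i _ => by ring
    _ = α * (∑ i, (y i - x i) ^ 2 + (∑ i, (y i - x i)) ^ 2) := by
        rw [sum_add_distrib, ← sum_mul, sq (∑ i, (y i - x i))]

theorem diagonallyStrictlyConcave_marginalUtility (hα : 0 < α) :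
    DiagonallyStrictlyConcave (marginalUtility (ι := ι) α θ) := by
  intro x y hne
  obtain ⟨i, hi⟩ := Function.ne_iff.mp hne
  have hsq : 0 < ∑ i, (y i - x i) ^ 2 :=
    sum_pos' (fun j _ => sq_nonneg _) ⟨i, mem_univ i, sq_pos_iff.mpr (sub_ne_zero.mpr hi.symm)⟩
  rw [sum_mul_marginalUtility_sub]
  positivity

variable [DecidableEq ι] {δ : ι → ℝ}

def utility (α θ : ℝ) (δ : ι → ℝ) (i : ι) (x : ι → ℝ) : ℝ :=
  -α * (x i) ^ 2 - (θ + α * ∑ m ∈ univ.erase i, x m) * (x i) + δ i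

theorem utility_update (x : ι → ℝ) (i : ι) (z : ℝ) :
    utility α θ δ i (Function.update x i z) =
      -α * z ^ 2 - (θ + α * ∑ m ∈ univ.erase i, x m) * z + δ i := by
  have hothers : ∑ m ∈ univ.erase i, Function.update x i z m = ∑ m ∈ univ.erase i, x m :=
    sum_congr rfl fun m hm => Function.update_of_ne (ne_of_mem_erase hm) _ _
  simp only [utility, Function.update_self, hothers]

theorem hasDerivAt_utility_update (x : ι → ℝ) (i : ι) :
    HasDerivAt (fun z => utility α θ δ i (Function.update x i z)) (marginalUtility α θ x i)
      (x i) := by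
  simp only [utility_update]
  set c := θ + α * ∑ m ∈ univ.erase i, x m with hc
  have hd : HasDerivAt (fun z => -α * z ^ 2 - c * z + δ i) (-α * (2 * x i) - c) (x i) := by
    simpa using (((hasDerivAt_pow 2 (x i)).const_mul (-α)).sub
      ((hasDerivAt_id' (x i)).const_mul c)).add_const (δ i)
  refine hd.congr_deriv ?_
  rw [hc, marginalUtility, ← add_sum_erase univ x (mem_univ i)]
  ring

theorem marginalUtility_mul_sub_nonpos {s : ι → Set ℝ} (hs : ∀ i, Convex ℝ (s i))
    {x : ι → ℝ} (hxs : ∀ i, x i ∈ s i)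
    (hNE : ∀ i, ∀ z ∈ s i, utility α θ δ i (Function.update x i z) ≤ utility α θ δ i x)
    (i : ι) {z : ℝ} (hz : z ∈ s i) :
    marginalUtility α θ x i * (z - x i) ≤ 0 := by
  have hmax : IsMaxOn (fun z => utility α θ δ i (Function.update x i z)) (s i) (x i) :=
    isMaxOn_iff.mpr fun z hz => by simpa only [Function.update_eq_self] using hNE i z hz
  exact hmax.deriv_mul_sub_nonpos (hasDerivAt_utility_update x i) (hs i) (hxs i) hz

end LinearQuadraticGame

open LinearQuadraticGame in
theorem stmt_2_general (n : ℕ) (α θ : ℝ) (δ xmin xmax : Fin n → ℝ) (hα : 0 < α)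
    (U : Fin n → (Fin n → ℝ) → ℝ)
    (hU : U = fun i x => -α * (x i) ^ 2 - (θ + α * ∑ m ∈ univ.erase i, x m) * (x i) + δ i)
    (x y : Fin n → ℝ)
    (hxΩ : ∀ i, x i ∈ Set.Icc (xmin i) (xmax i))
    (hyΩ : ∀ i, y i ∈ Set.Icc (xmin i) (xmax i))
    (hxNE : ∀ i, ∀ z ∈ Set.Icc (xmin i) (xmax i), U i (Function.update x i z) ≤ U i x)
    (hyNE : ∀ i, ∀ z ∈ Set.Icc (xmin i) (xmax i), U i (Function.update y i z) ≤ U i y) :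
    x = y := by
  subst hU
  have hconvex : ∀ i, Convex ℝ (Set.Icc (xmin i) (xmax i)) := fun i => convex_Icc _ _
  exact (diagonallyStrictlyConcave_marginalUtility hα).eq_of_forall_mul_sub_nonpos
    (fun i => marginalUtility_mul_sub_nonpos hconvex hxΩ hxNE i (hyΩ i))
    (fun i => marginalUtility_mul_sub_nonpos hconvex hyΩ hyNE i (hxΩ i))

theorem stmt_2 (n : ℕ) (α θ : ℝ) (δ xmin xmax : Fin n → ℝ) (hα : 0 < α)
    (hx : ∀ i, xmin i ≤ xmax i)
    (U : Fin n → (Fin n → ℝ) → ℝ)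
    (hU : U = fun i x => -α * (x i) ^ 2 - (θ + α * ∑ m ∈ univ.erase i, x m) * (x i) + δ i)
    (x y : Fin n → ℝ)
    (hxΩ : ∀ i, x i ∈ Set.Icc (xmin i) (xmax i))
    (hyΩ : ∀ i, y i ∈ Set.Icc (xmin i) (xmax i))
    (hxNE : ∀ i, ∀ z ∈ Set.Icc (xmin i) (xmax i), U i (Function.update x i z) ≤ U i x)
    (hyNE : ∀ i, ∀ z ∈ Set.Icc (xmin i) (xmax i), U i (Function.update y i z) ≤ U i y) :
    x = y :=
  stmt_2_general n α θ δ xmin xmax hα U hU x y hxΩ hyΩ hxNE hyNE
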